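/- arXiv:2408.15776 — 5 statements merged into one kernel-verified Lean document; each statement's English description precedes it below -/
import Mathlib

section
/- Let H be a hypergraph such that V(H) is not a transversal contained properly in itself, and assume M is a proper subset of V(H). Then M is a minimal transversal of H if and only if M ∪ {v} is a minimal dominating set of the graph B(H), where B(H) is obtained from the incidence graph of H by adding a new vertex v adjacent to every vertex of V(H). -/
variable {α : Type*}

/-- Vertices of the graph `B(H)`: the extra vertex `v` (= `none`), the vertices of `H`
(`some (Sum.inl x)`), and the hyperedge-vertices `y_e` (`some (Sum.inr e)`). -/
abbrev BVert (E : Set (Set α)) := Option (α ⊕ {e : Set α // e ∈ E})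

/-- Adjacency of `B(H)`: `x` is adjacent to `y_e` iff `x ∈ e` (the incidence graph),
and the extra vertex `none` is adjacent to every vertex of `V(H)`. -/
def BAdj (E : Set (Set α)) (a b : BVert E) : Prop :=
  (∃ x e, a = some (Sum.inl x) ∧ b = some (Sum.inr e) ∧ x ∈ e.1) ∨
  (∃ x e, b = some (Sum.inl x) ∧ a = some (Sum.inr e) ∧ x ∈ e.1) ∨
  (a = none ∧ ∃ x, b = some (Sum.inl x)) ∨
  (b = none ∧ ∃ x, a = some (Sum.inl x))

/-- The graph `B(H)`, obtained from the incidence graph of `H` by adding a new vertex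
adjacent to all vertices of `V(H)`. -/
def BGraph (E : Set (Set α)) : SimpleGraph (BVert E) where
  Adj a b := BAdj E a b
  symm := by
    constructor
    intro a b h
    rcases h with h | h | h | h
    · exact Or.inr (Or.inl h)
    · exact Or.inl h
    · exact Or.inr (Or.inr (Or.inr h))
    · exact Or.inr (Or.inr (Or.inl h))
  loopless := by
    constructor
    intro a h
    rcases h with ⟨x, e, h1, h2, _⟩ | ⟨x, e, h1, h2, _⟩ | ⟨h1, x, h2⟩ | ⟨h1, x, h2⟩ <;>
      subst h1 <;> simp_all

def Dominating {W : Type*} (G : SimpleGraph W) (D : Set W) : Prop :=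
  ∀ v ∉ D, ∃ u ∈ D, G.Adj v u

def MinimalDominating {W : Type*} (G : SimpleGraph W) (D : Set W) : Prop :=
  Dominating G D ∧ ∀ D' ⊂ D, ¬ Dominating G D'

def IsTransversal (E : Set (Set α)) (M : Set α) : Prop :=
  ∀ e ∈ E, (M ∩ e).Nonempty

def IsMinTransversal (E : Set (Set α)) (M : Set α) : Prop :=
  IsTransversal E M ∧ ∀ M' ⊂ M, ¬ IsTransversal E M'

lemma dom_iff (E : Set (Set α)) (M : Set α) :
    Dominating (BGraph E)
      (insert (none : BVert E) ((fun x => (some (Sum.inl x) : BVert E)) '' M)) ↔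
      IsTransversal E M := by
  constructor
  · intro h e he
    have hne : (some (Sum.inr ⟨e, he⟩) : BVert E) ∉
        insert (none : BVert E) ((fun x => (some (Sum.inl x) : BVert E)) '' M) := by simp
    obtain ⟨u, hu, hadj⟩ := h _ hne
    rcases hu with rfl | ⟨x, hx, rfl⟩
    · rcases hadj with ⟨x, e', h1, h2, _⟩ | ⟨x, e', h1, h2, _⟩ | ⟨h1, x, h2⟩ | ⟨h1, x, h2⟩ <;>
        simp_all
    · rcases hadj with ⟨x', e', h1, h2, hmem⟩ | ⟨x', e', h1, h2, hmem⟩ | ⟨h1, y, h2⟩ |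
        ⟨h1, y, h2⟩
      · simp at h1
      · simp only [Option.some.injEq, Sum.inl.injEq, Sum.inr.injEq] at h1 h2
        subst h1; subst h2
        exact ⟨x, hx, hmem⟩
      · simp at h1
      · simp at h1
  · intro h u hu
    match u with
    | none => exact absurd (Set.mem_insert _ _) hu
    | some (Sum.inl x) =>
      exact ⟨none, Set.mem_insert _ _, Or.inr (Or.inr (Or.inr ⟨rfl, x, rfl⟩))⟩
    | some (Sum.inr e) =>
      obtain ⟨x, hxM, hxe⟩ := h e.1 e.2
      exact ⟨some (Sum.inl x), Set.mem_insert_of_mem _ ⟨x, hxM, rfl⟩,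
        Or.inr (Or.inl ⟨x, e, rfl, rfl, hxe⟩)⟩

/-- For `M ⊊ V(H)`: `M` is a minimal transversal of `H` iff `M ∪ {v}` is a minimal
dominating set of `B(H)`. -/
theorem stmt3 (E : Set (Set α)) (hE : ∀ e ∈ E, e.Nonempty)
    (M : Set α) (hM : M ⊂ Set.univ) :
    IsMinTransversal E M ↔
      MinimalDominating (BGraph E)
        (insert (none : BVert E) ((fun x => (some (Sum.inl x) : BVert E)) '' M)) := by
  obtain ⟨z, hz⟩ : ∃ z, z ∉ M := by
    rcases hM with ⟨_, h2⟩
    by_contra h; push_neg at h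
    exact h2 fun x _ => h x
  constructor
  · rintro ⟨htr, hmin⟩
    refine ⟨(dom_iff E M).2 htr, ?_⟩
    rintro D' ⟨hsub, hne⟩ hdom
    by_cases hn : (none : BVert E) ∈ D'
    · set M' : Set α := {x | (some (Sum.inl x) : BVert E) ∈ D'} with hM'
      have hM'sub : M' ⊆ M := by
        intro x hx
        rcases hsub hx with h | ⟨y, hy, heq⟩
        · simp at h
        · simp only [Option.some.injEq, Sum.inl.injEq] at heq
          rwa [heq] at hy
      have hM'tr : IsTransversal E M' := by
        intro e he
        have hnot : (some (Sum.inr ⟨e, he⟩) : BVert E) ∉ D' := by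
          intro hc
          rcases hsub hc with h | ⟨y, hy, heq⟩ <;> simp_all
        obtain ⟨u, hu, hadj⟩ := hdom _ hnot
        rcases hadj with ⟨x', e', h1, h2, hmem⟩ | ⟨x', e', h1, h2, hmem⟩ | ⟨h1, y, h2⟩ |
          ⟨h1, y, h2⟩
        · simp at h1
        · simp only [Option.some.injEq, Sum.inr.injEq] at h2
          subst h2
          exact ⟨x', show some (Sum.inl x') ∈ D' by rw [h1] at hu; exact hu, hmem⟩
        · simp at h1
        · simp at h2
      have : M' ≠ M := by
        rintro rfl
        apply hne
        intro u hu
        rcases hu with rfl | ⟨y, hy, rfl⟩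
        · exact hn
        · exact hy
      exact hmin M' ⟨hM'sub, fun h => this (le_antisymm hM'sub h)⟩ hM'tr
    · have hznot : (some (Sum.inl z) : BVert E) ∉ D' := by
        intro hc
        rcases hsub hc with h | ⟨y, hy, heq⟩
        · simp at h
        · simp only [Option.some.injEq, Sum.inl.injEq] at heq
          exact hz (heq ▸ hy)
      obtain ⟨u, hu, hadj⟩ := hdom _ hznot
      rcases hsub hu with rfl | ⟨y, hy, rfl⟩
      · exact hn hu
      · rcases hadj with ⟨x', e', h1, h2, hmem⟩ | ⟨x', e', h1, h2, hmem⟩ | ⟨h1, y', h2⟩ |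
          ⟨h1, y', h2⟩ <;> simp_all
  · rintro ⟨hdom, hmin⟩
    refine ⟨(dom_iff E M).1 hdom, ?_⟩
    rintro M' ⟨hsub, hne⟩ htr'
    obtain ⟨m, hmM, hmM'⟩ : ∃ m ∈ M, m ∉ M' := by
      by_contra h; push_neg at h
      exact hne h
    refine hmin (insert (none : BVert E) ((fun x => (some (Sum.inl x) : BVert E)) '' M'))
      ⟨?_, ?_⟩ ((dom_iff E M').2 htr')
    · intro u hu
      rcases hu with rfl | ⟨y, hy, rfl⟩
      · exact Set.mem_insert _ _
      · exact Set.mem_insert_of_mem _ ⟨y, hsub hy, rfl⟩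
    · intro h
      have := h (Set.mem_insert_of_mem _ ⟨m, hmM, rfl⟩)
      rcases this with h' | ⟨y, hy, heq⟩
      · simp at h'
      · simp only [Option.some.injEq, Sum.inl.injEq] at heq
        exact hmM' (heq ▸ hy)
end

section
/- Let (T,χ) be a tree decomposition of G rooted at node u_1 with a depth-first order P of the nodes. Let B map each vertex v of G to the earliest node (in the order P) whose bag contains v, and let Q be any total order of V(G) such that B(v_i) < B(v_j) implies v_i precedes v_j. Then for every vertex v_i, all neighbors of v_i that precede it in Q are contained in the bag χ(B(v_i)). -/
/-- `u` is an ancestor of `t` in the rooted tree given by the parent function `par`. -/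
def Anc {m : ℕ} (par : Fin m → Fin m) (u t : Fin m) : Prop :=
  Relation.ReflTransGen (fun x y => par x = y) t u

/-- Let `(T,χ)` be a tree decomposition of `G`, rooted at node `0`, whose nodes
`Fin m` are indexed by a depth-first order (each node precedes its subtree, and
subtrees are intervals).  `B` maps each vertex to the earliest node whose bag contains
it, and the vertex order on `Fin n` is compatible with `B`.  Then all neighbors of a
vertex `a` that precede `a` are contained in the bag `χ (B a)`. -/
theorem stmt7 {n m : ℕ} [NeZero m] (G : SimpleGraph (Fin n))
    (par : Fin m → Fin m) (χ : Fin m → Set (Fin n)) (B : Fin n → Fin m)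
    (hroot : par 0 = 0)
    (hpar : ∀ i : Fin m, i ≠ 0 → par i < i)
    (hdfs : ∀ i j k : Fin m, Anc par i k → i ≤ j → j ≤ k → Anc par i j)
    (hcover : ∀ v : Fin n, ∃ i, v ∈ χ i)
    (hedge : ∀ v w : Fin n, G.Adj v w → ∃ i, v ∈ χ i ∧ w ∈ χ i)
    (hconn : ∀ (v : Fin n) (i : Fin m), v ∈ χ i → i ≠ B v → v ∈ χ (par i))
    (hB : ∀ v : Fin n, v ∈ χ (B v) ∧ ∀ i : Fin m, v ∈ χ i → B v ≤ i)
    (hQ : ∀ a b : Fin n, B a < B b → a < b) :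
    ∀ a b : Fin n, G.Adj a b → b < a → b ∈ χ (B a) := by
  intro a b hab hba
  -- Lemma 1: B v is an ancestor of every node whose bag contains v
  have anc : ∀ (k : ℕ) (v : Fin n) (i : Fin m), i.val = k → v ∈ χ i → Anc par (B v) i := by
    intro k
    induction k using Nat.strong_induction_on with
    | _ k ih =>
      intro v i hk hv
      by_cases hiB : i = B v
      · exact hiB ▸ Relation.ReflTransGen.refl
      · have hi0 : i ≠ 0 := by
          intro h0
          apply hiB
          have hle : B v ≤ i := (hB v).2 i hv
          exact (le_antisymm hle (h0 ▸ Fin.zero_le (B v))).symm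
        have hlt : par i < i := hpar i hi0
        have h2 : v ∈ χ (par i) := hconn v i hv hiB
        have := ih (par i).val (hk ▸ hlt) v (par i) rfl h2
        exact Relation.ReflTransGen.head rfl this
  -- Lemma 2: bags containing v are closed along the ancestor chain down to B v
  have chain : ∀ (v : Fin n) (i j : Fin m), v ∈ χ i → Anc par j i → B v ≤ j → v ∈ χ j := by
    intro v i j hv h
    induction h with
    | refl => intro _; exact hv
    | tail h1 h2 ih =>
      rename_i c j'
      intro hle
      by_cases hc0 : c = 0
      · have hj' : j' = 0 := by rw [← h2, hc0, hroot]
        have : B v = 0 := le_antisymm (hj' ▸ hle) (Fin.zero_le (B v))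
        rw [hj', ← this]; exact (hB v).1
      · have hlt : par c < c := hpar c hc0
        have hvc : v ∈ χ c := ih (le_of_lt (lt_of_le_of_lt (h2 ▸ hle) hlt))
        by_cases hcB : c = B v
        · exact absurd (hcB ▸ hlt : par c < B v) (not_lt.2 (h2 ▸ hle))
        · exact h2 ▸ hconn v c hvc hcB
  obtain ⟨i, hai, hbi⟩ := hedge a b hab
  have hBle : B b ≤ B a := le_of_not_gt fun h => absurd (hQ a b h) (not_lt.2 (le_of_lt hba))
  exact chain b i (B a) hbi (anc i.val a i rfl hai) hBle
end

section
/- In a nice tree decomposition (T,χ), for every vertex v of G and every other vertex w contained in the bag B(v), the first bag containing w strictly precedes the first bag containing v in the depth-first order; consequently the map B sending each vertex to its first bag is injective. -/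
/-- Node `u` of the rooted tree decomposition `(par, χ)` is of one of the nice kinds:
a leaf (no children, empty bag); an introduce or forget node (a unique child whose bag
differs by the insertion/removal of one vertex); or a join node (exactly two children,
both with the same bag as `u`). -/
def NiceAt {n m : ℕ} (par : Fin m → Fin m) (χ : Fin m → Set (Fin n)) (u : Fin m) : Prop :=
  ((∀ j, par j = u → j = u) ∧ χ u = ∅) ∨
  (∃ c, par c = u ∧ c ≠ u ∧ (∀ j, par j = u → j ≠ u → j = c) ∧
    ((∃ x, x ∉ χ c ∧ χ u = insert x (χ c)) ∨ (∃ x ∈ χ c, χ u = χ c \ {x}))) ∨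
  (∃ c₁ c₂, par c₁ = u ∧ par c₂ = u ∧ c₁ ≠ u ∧ c₂ ≠ u ∧ c₁ ≠ c₂ ∧
    (∀ j, par j = u → j ≠ u → j = c₁ ∨ j = c₂) ∧ χ u = χ c₁ ∧ χ u = χ c₂)

/-- In a nice tree decomposition (rooted at node `0`, root bag empty, nodes indexed by
a depth-first order), for every vertex `v` and every other vertex `w` of the bag
`χ (B v)`, the first bag containing `w` strictly precedes the first bag containing `v`;
consequently the first-appearance map `B` is injective. -/
theorem stmt8 {n m : ℕ} [NeZero m]
    (par : Fin m → Fin m) (χ : Fin m → Set (Fin n)) (B : Fin n → Fin m)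
    (hroot : par 0 = 0)
    (hrootbag : χ 0 = ∅)
    (hpar : ∀ i : Fin m, i ≠ 0 → par i < i)
    (hdfs : ∀ i j k : Fin m, Anc par i k → i ≤ j → j ≤ k → Anc par i j)
    (hnice : ∀ u : Fin m, NiceAt par χ u)
    (hcover : ∀ v : Fin n, ∃ i, v ∈ χ i)
    (hconn : ∀ (v : Fin n) (i : Fin m), v ∈ χ i → i ≠ B v → v ∈ χ (par i))
    (hB : ∀ v : Fin n, v ∈ χ (B v) ∧ ∀ i : Fin m, v ∈ χ i → B v ≤ i) :
    (∀ v w : Fin n, w ∈ χ (B v) → w ≠ v → B w < B v) ∧ Function.Injective B := by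
  have main : ∀ v w : Fin n, w ∈ χ (B v) → w ≠ v → B w < B v := by
    intro v w hw hne
    set u := B v with hu
    have hv : v ∈ χ u := (hB v).1
    have hwle : B w ≤ u := (hB w).2 u hw
    rcases lt_or_eq_of_le hwle with h | hBw
    · exact h
    · -- B w = u; derive a contradiction
      exfalso
      have hu0 : u ≠ 0 := by
        intro h0
        rw [h0, hrootbag] at hv
        exact hv
      have hplt : par u < u := hpar u hu0
      have hpne : u ≠ par u := (ne_of_lt hplt).symm
      have hvp : v ∉ χ (par u) := fun h =>
        absurd ((hB v).2 (par u) h) (not_le_of_gt hplt)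
      have hwp : w ∉ χ (par u) := fun h => by
        have := (hB w).2 (par u) h
        rw [hBw] at this
        exact absurd this (not_le_of_gt hplt)
      rcases hnice (par u) with ⟨hleaf, _⟩ | ⟨c, hc, hcne, huniq, hkind⟩ |
        ⟨c₁, c₂, hc₁, hc₂, _, _, _, huniq, hb₁, hb₂⟩
      · exact hpne (hleaf u rfl)
      · have huc : u = c := huniq u rfl hpne
        rcases hkind with ⟨x, _, hins⟩ | ⟨x, _, hdel⟩
        · rw [hins, ← huc] at hvp
          exact hvp (Set.mem_insert_of_mem x hv)
        · rw [hdel, ← huc] at hvp hwp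
          have hvx : v = x := by
            by_contra hvx
            exact hvp ⟨hv, hvx⟩
          have hwx : w = x := by
            by_contra hwx
            exact hwp ⟨hw, hwx⟩
          exact hne (hwx.trans hvx.symm)
      · rcases huniq u rfl hpne with h | h
        · rw [hb₁, ← h] at hvp; exact hvp hv
        · rw [hb₂, ← h] at hvp; exact hvp hv
  refine ⟨main, ?_⟩
  intro v w hvw
  by_contra hne
  have h1 : w ∈ χ (B v) := hvw ▸ (hB w).1
  have := main v w h1 (fun h => hne h.symm)
  rw [hvw] at this
  exact lt_irrefl _ this
end

section
/- Let (T,χ) be a nice disjoint-branch tree decomposition of G, with vertex order Q = ⟨v_1,...,v_n⟩ compatible with the depth-first order of first-appearance bags. Then for every vertex v_j in the bag B(v_i), the set of neighbors of v_j among {v_{i+1},...,v_n} equals the set of neighbors of v_j in V_{B(v_i)} \ χ(B(v_i)), where V_{B(v_i)} is the union of bags in the subtree rooted at B(v_i). -/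
/-- `V_u`: the union of the bags of the nodes of the subtree rooted at `u`. -/
def Vsub {n m : ℕ} (par : Fin m → Fin m) (χ : Fin m → Set (Fin n)) (u : Fin m) :
    Set (Fin n) :=
  {x | ∃ t, Anc par u t ∧ x ∈ χ t}

/-- Node `u` of a nice disjoint-branch tree decomposition is a leaf, an introduce node,
a forget node, or a disjoint join node (two children with disjoint bags whose union is
the bag of `u`). -/
def NiceDBAt {n m : ℕ} (par : Fin m → Fin m) (χ : Fin m → Set (Fin n)) (u : Fin m) : Prop :=
  ((∀ j, par j = u → j = u) ∧ χ u = ∅) ∨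
  (∃ c, par c = u ∧ c ≠ u ∧ (∀ j, par j = u → j ≠ u → j = c) ∧
    ((∃ x, x ∉ χ c ∧ χ u = insert x (χ c)) ∨ (∃ x ∈ χ c, χ u = χ c \ {x}))) ∨
  (∃ c₁ c₂, par c₁ = u ∧ par c₂ = u ∧ c₁ ≠ u ∧ c₂ ≠ u ∧ c₁ ≠ c₂ ∧
    (∀ j, par j = u → j ≠ u → j = c₁ ∨ j = c₂) ∧
    Disjoint (χ c₁) (χ c₂) ∧ χ u = χ c₁ ∪ χ c₂)

section Aux
variable {n m : ℕ} [NeZero m] {par : Fin m → Fin m} {χ : Fin m → Set (Fin n)} {B : Fin n → Fin m}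

lemma par_le (hroot : par 0 = 0) (hpar : ∀ i : Fin m, i ≠ 0 → par i < i) (b : Fin m) :
    par b ≤ b := by
  by_cases hb : b = 0
  · subst hb; rw [hroot]
  · exact (hpar b hb).le

lemma anc_le (hroot : par 0 = 0) (hpar : ∀ i : Fin m, i ≠ 0 → par i < i)
    {u t : Fin m} (h : Anc par u t) : u ≤ t := by
  induction h with
  | refl => exact le_refl _
  | tail h1 h2 ih => exact le_trans (h2 ▸ par_le hroot hpar _) ih

lemma chainB (hrootbag : χ 0 = ∅)
    (hpar : ∀ i : Fin m, i ≠ 0 → par i < i)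
    (hconn : ∀ (v : Fin n) (i : Fin m), v ∈ χ i → i ≠ B v → v ∈ χ (par i)) :
    ∀ (k : ℕ) (i : Fin m), i.val ≤ k → ∀ v, v ∈ χ i → Anc par (B v) i := by
  intro k
  induction k with
  | zero =>
    intro i hi v hv
    have h0 : i = 0 := Fin.le_zero_iff'.mp (by exact hi)
    subst h0
    rw [hrootbag] at hv
    exact absurd hv (Set.notMem_empty v)
  | succ k ih =>
    intro i hi v hv
    by_cases h : i = B v
    · subst h; exact Relation.ReflTransGen.refl
    · have hi0 : i ≠ 0 := by
        rintro rfl; rw [hrootbag] at hv; exact hv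
      have hlt := hpar i hi0
      have := ih (par i) (by omega) v (hconn v i hv h)
      exact this.head rfl

lemma memchain (hconn : ∀ (v : Fin n) (i : Fin m), v ∈ χ i → i ≠ B v → v ∈ χ (par i))
    {u t : Fin m} (h : Anc par u t) :
    ∀ v, v ∈ χ t → v ∈ χ u ∨ Anc par u (B v) := by
  unfold Anc at h
  induction h using Relation.ReflTransGen.head_induction_on with
  | refl => exact fun v hv => Or.inl hv
  | head h' hrest ih =>
    intro v hv
    rename_i a c
    by_cases ha : a = B v
    · refine Or.inr ?_
      rw [← ha]
      exact hrest.head h'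
    · exact ih v (h' ▸ hconn v a hv ha)

lemma mem_of_between (hroot : par 0 = 0) (hpar : ∀ i : Fin m, i ≠ 0 → par i < i)
    (hconn : ∀ (v : Fin n) (i : Fin m), v ∈ χ i → i ≠ B v → v ∈ χ (par i))
    (hB : ∀ v : Fin n, v ∈ χ (B v) ∧ ∀ i : Fin m, v ∈ χ i → B v ≤ i)
    {u t : Fin m} {v : Fin n} (hv : v ∈ χ t) (h1 : Anc par u t) (h2 : Anc par (B v) u) :
    v ∈ χ u := by
  rcases memchain hconn h1 v hv with h | h
  · exact h
  · have := le_antisymm (anc_le hroot hpar h) (anc_le hroot hpar h2)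
    exact this ▸ (hB v).1

lemma Binj (hrootbag : χ 0 = ∅)
    (hpar : ∀ i : Fin m, i ≠ 0 → par i < i)
    (hnice : ∀ u : Fin m, NiceDBAt par χ u)
    (hB : ∀ v : Fin n, v ∈ χ (B v) ∧ ∀ i : Fin m, v ∈ χ i → B v ≤ i) :
    ∀ v w : Fin n, B v = B w → v = w := by
  intro v w h
  have hv : v ∈ χ (B v) := (hB v).1
  have hw : w ∈ χ (B v) := h ▸ (hB w).1
  have hu0 : B v ≠ 0 := by rintro h0; rw [h0, hrootbag] at hv; exact hv
  have hpu : par (B v) < B v := hpar _ hu0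
  have hvp : v ∉ χ (par (B v)) := fun hc => absurd ((hB v).2 _ hc) (not_le.2 hpu)
  have hwp : w ∉ χ (par (B v)) := fun hc => by
    have := (hB w).2 _ hc; rw [← h] at this; exact absurd this (not_le.2 hpu)
  have hne : B v ≠ par (B v) := ne_of_gt hpu
  rcases hnice (par (B v)) with ⟨hnoc, _⟩ | ⟨c, hc, hcne, huniq, hio⟩ |
    ⟨c₁, c₂, h₁, h₂, hne₁, hne₂, hnc, huniq, hdisj, hbag⟩
  · exact absurd (hnoc (B v) rfl) hne
  · have hc' : B v = c := huniq (B v) rfl hne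
    rcases hio with ⟨x, hx, hbag⟩ | ⟨x, hx, hbag⟩
    · exact absurd (by rw [hbag]; exact Set.mem_insert_of_mem x (hc' ▸ hv)) hvp
    · rw [hbag, ← hc'] at hvp hwp
      have hv' : v = x := by
        by_contra hvx
        exact hvp ⟨hv, by simpa using hvx⟩
      have hw' : w = x := by
        by_contra hwx
        exact hwp ⟨hw, by simpa using hwx⟩
      rw [hv', hw']
  · refine absurd ?_ hvp
    rw [hbag]
    rcases huniq (B v) rfl hne with hc' | hc'
    · exact Set.mem_union_left _ (hc' ▸ hv)
    · exact Set.mem_union_right _ (hc' ▸ hv)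

lemma comparable (hroot : par 0 = 0) (hrootbag : χ 0 = ∅)
    (hpar : ∀ i : Fin m, i ≠ 0 → par i < i)
    (hdfs : ∀ i j k : Fin m, Anc par i k → i ≤ j → j ≤ k → Anc par i j)
    (hnice : ∀ u : Fin m, NiceDBAt par χ u)
    (hconn : ∀ (v : Fin n) (i : Fin m), v ∈ χ i → i ≠ B v → v ∈ χ (par i))
    (hB : ∀ v : Fin n, v ∈ χ (B v) ∧ ∀ i : Fin m, v ∈ χ i → B v ≤ i) :
    ∀ (k : ℕ) (y : Fin m), y.val ≤ k → ∀ (x : Fin m) (b : Fin n),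
      b ∈ χ x → b ∈ χ y → x ≤ y → Anc par x y := by
  intro k
  induction k with
  | zero =>
    intro y hy x b hbx hby hxy
    have h0 : y = 0 := Fin.le_zero_iff'.mp (by exact hy)
    subst h0; rw [hrootbag] at hby; exact absurd hby (Set.notMem_empty b)
  | succ k ih =>
    intro y hy x b hbx hby hxy
    rcases eq_or_lt_of_le hxy with rfl | hlt
    · exact Relation.ReflTransGen.refl
    · have hy0 : y ≠ 0 := by rintro rfl; rw [hrootbag] at hby; exact hby
      have hpy : par y < y := hpar y hy0
      have hyB : y ≠ B b := by
        intro hyb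
        have := (hB b).2 x hbx
        rw [← hyb] at this
        exact absurd hlt (not_lt.2 this)
      have hbpy : b ∈ χ (par y) := hconn b y hby hyB
      by_cases hxp : x ≤ par y
      · have hpy0 : (par y).val ≤ k := by
          have h1 : (par y).val < y.val := hpy
          omega
        have := ih (par y) hpy0 x b hbx hbpy hxp
        exact this.head rfl
      · push_neg at hxp
        exfalso
        have hx_anc : Anc par (par y) x :=
          hdfs (par y) x y (Relation.ReflTransGen.single rfl) hxp.le hlt.le
        rcases Relation.ReflTransGen.cases_tail hx_anc with heq | ⟨d, hxd, hd⟩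
        · exact absurd heq (ne_of_lt hxp)
        · have hdx : Anc par d x := hxd
          have hbd : b ∈ χ d := by
            rcases memchain hconn hdx b hbx with h | h
            · exact h
            · have h1 : d ≤ B b := anc_le hroot hpar h
              have h2 : B b ≤ par y := (hB b).2 _ hbpy
              have h3 : par d ≤ d := par_le hroot hpar d
              rw [hd] at h3
              have h4 : d = B b := le_antisymm h1 (le_trans h2 h3)
              exact h4 ▸ (hB b).1
          have hdy : d < y := lt_of_le_of_lt (anc_le hroot hpar hdx) hlt
          have hdp : d ≠ par y := by
            intro hdpy
            have h5 : par d = d := by rw [hd, hdpy]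
            have hd0 : d = 0 := by
              by_contra h0
              exact absurd h5 (ne_of_lt (hpar d h0))
            rw [hdpy] at hd0
            rw [hd0, hrootbag] at hbpy
            exact hbpy
          have hyp : y ≠ par y := ne_of_gt hpy
          rcases hnice (par y) with ⟨hnoc, _⟩ | ⟨c, hc, hcne, huniq, hio⟩ |
            ⟨c₁, c₂, h₁, h₂, hne₁, hne₂, hnc, huniq, hdisj, hbag⟩
          · exact hyp (hnoc y rfl)
          · have h5 : y = c := huniq y rfl hyp
            have h6 : d = c := huniq d hd hdp
            exact hdy.ne (h6.trans h5.symm)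
          · rcases huniq y rfl hyp with hy' | hy' <;>
              rcases huniq d hd hdp with hd' | hd'
            · exact hdy.ne (hd'.trans hy'.symm)
            · exact hdisj.ne_of_mem (hy' ▸ hby) (hd' ▸ hbd) rfl
            · exact hdisj.ne_of_mem (hd' ▸ hbd) (hy' ▸ hby) rfl
            · exact hdy.ne (hd'.trans hy'.symm)

end Aux

/-- In a nice disjoint-branch tree decomposition of `G`, with first-appearance map `B`
and compatible vertex order, for every vertex `b` in the bag `χ (B a)`, the neighbors
of `b` among the vertices following `a` are exactly the neighbors of `b` in
`V_{B a} \ χ (B a)`. -/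
theorem stmt10 {n m : ℕ} [NeZero m] (G : SimpleGraph (Fin n))
    (par : Fin m → Fin m) (χ : Fin m → Set (Fin n)) (B : Fin n → Fin m)
    (hroot : par 0 = 0)
    (hrootbag : χ 0 = ∅)
    (hpar : ∀ i : Fin m, i ≠ 0 → par i < i)
    (hdfs : ∀ i j k : Fin m, Anc par i k → i ≤ j → j ≤ k → Anc par i j)
    (hnice : ∀ u : Fin m, NiceDBAt par χ u)
    (hcover : ∀ v : Fin n, ∃ i, v ∈ χ i)
    (hedge : ∀ v w : Fin n, G.Adj v w → ∃ i, v ∈ χ i ∧ w ∈ χ i)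
    (hconn : ∀ (v : Fin n) (i : Fin m), v ∈ χ i → i ≠ B v → v ∈ χ (par i))
    (hB : ∀ v : Fin n, v ∈ χ (B v) ∧ ∀ i : Fin m, v ∈ χ i → B v ≤ i)
    (hQ : ∀ a b : Fin n, B a < B b → a < b) :
    ∀ a b : Fin n, b ∈ χ (B a) →
      {c : Fin n | G.Adj b c ∧ a < c} =
        {c : Fin n | G.Adj b c ∧ c ∈ Vsub par χ (B a) ∧ c ∉ χ (B a)} := by
  intro a b hb
  ext c
  simp only [Set.mem_setOf_eq]
  constructor
  · rintro ⟨hadj, hac⟩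
    have hle : B a ≤ B c := by
      by_contra h
      push_neg at h
      exact absurd hac (not_lt.2 (hQ c a h).le)
    have hnotin : c ∉ χ (B a) := by
      intro hc
      have h1 : B c ≤ B a := (hB c).2 _ hc
      have h2 : a = c := Binj hrootbag hpar hnice hB a c (le_antisymm hle h1)
      exact absurd (h2 ▸ hac) (lt_irrefl a)
    obtain ⟨t, hbt, hct⟩ := hedge b c hadj
    by_cases hta : t ≤ B a
    · exfalso
      have h1 : B c ≤ t := (hB c).2 t hct
      have h2 : t = B a := le_antisymm hta (le_trans hle h1)
      exact hnotin (h2 ▸ hct)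
    · push_neg at hta
      have hanc : Anc par (B a) t :=
        comparable hroot hrootbag hpar hdfs hnice hconn hB t.val t (le_refl _)
          (B a) b hb hbt hta.le
      exact ⟨hadj, ⟨t, hanc, hct⟩, hnotin⟩
  · rintro ⟨hadj, ⟨t, hanc, hct⟩, hnot⟩
    refine ⟨hadj, ?_⟩
    have h1 : B a ≤ t := anc_le hroot hpar hanc
    have h2 : ¬ B c ≤ B a := by
      intro hle
      have h3 : Anc par (B c) t :=
        chainB hrootbag hpar hconn t.val t (le_refl _) c hct
      have h4 : Anc par (B c) (B a) := hdfs (B c) (B a) t h3 hle h1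
      exact hnot (mem_of_between hroot hpar hconn hB hct hanc h4)
    exact hQ a c (not_le.mp h2)
end

section
/- Let D be a minimal dominating set of B(H) such that D is contained in V(H) ∪ {v}, where v is the extra vertex of B(H). Then D \ {v} is a transversal of H, and moreover it is a minimal transversal when v ∈ D. -/
variable {α : Type*}

/-- If `D` is a minimal dominating set of `B(H)` contained in `V(H) ∪ {v}`, then
`D \ {v}` (identified with the set `M` of vertices `x` of `H` with `some (inl x) ∈ D`)
is a transversal of `H`, and it is a minimal transversal whenever `v ∈ D`. -/
theorem stmt13 (E : Set (Set α)) (hE : ∀ e ∈ E, e.Nonempty)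
    (D : Set (BVert E))
    (hD : MinimalDominating (BGraph E) D)
    (hsub : D ⊆ insert (none : BVert E)
      ((fun x => (some (Sum.inl x) : BVert E)) '' (Set.univ : Set α))) :
    IsTransversal E {x : α | (some (Sum.inl x) : BVert E) ∈ D} ∧
      ((none : BVert E) ∈ D →
        IsMinTransversal E {x : α | (some (Sum.inl x) : BVert E) ∈ D}) := by
  set M : Set α := {x : α | (some (Sum.inl x) : BVert E) ∈ D} with hMdef
  have hM : IsTransversal E M := by
    intro e he
    have hye : (some (Sum.inr ⟨e, he⟩) : BVert E) ∉ D := by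
      intro h
      rcases hsub h with h | ⟨x, _, hx⟩ <;> simp_all
    obtain ⟨u, hu, hadj⟩ := hD.1 _ hye
    rcases hadj with ⟨x, e', h1, h2, hx⟩ | ⟨x, e', h1, h2, hx⟩ | ⟨h1, _⟩ | ⟨h1, x, hx⟩
    · simp at h1
    · simp only [Option.some.injEq, Sum.inr.injEq] at h2
      subst h2
      subst h1
      exact ⟨x, hu, hx⟩
    · simp at h1
    · simp at hx
  refine ⟨hM, fun hv => ⟨hM, fun M' hss hT' => ?_⟩⟩
  set D' : Set (BVert E) := insert none ((fun x => (some (Sum.inl x) : BVert E)) '' M') with hD'def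
  have hsub' : D' ⊂ D := by
    constructor
    · rintro a (rfl | ⟨x, hx, rfl⟩)
      · exact hv
      · exact hss.1 hx
    · intro hDD'
      obtain ⟨x, hxM, hxM'⟩ := Set.exists_of_ssubset hss
      have : (some (Sum.inl x) : BVert E) ∈ D' := hDD' hxM
      rcases this with h | ⟨y, hy, hxy⟩
      · simp at h
      · simp only [Option.some.injEq, Sum.inl.injEq] at hxy
        exact hxM' (hxy ▸ hy)
  refine hD.2 D' hsub' ?_
  intro w hw
  match w with
  | none => exact absurd (Set.mem_insert _ _) hw
  | some (Sum.inl x) =>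
      exact ⟨none, Set.mem_insert _ _, Or.inr (Or.inr (Or.inr ⟨rfl, x, rfl⟩))⟩
  | some (Sum.inr e) =>
      obtain ⟨x, hxM', hxe⟩ := hT' e.1 e.2
      exact ⟨some (Sum.inl x), Set.mem_insert_of_mem _ ⟨x, hxM', rfl⟩,
        Or.inr (Or.inl ⟨x, e, rfl, rfl, hxe⟩)⟩
end
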